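/- Assume r is nonconstant. Then for every point p ∈ ℝ² with p ≠ (0,0), the set {t ∈ Ω : P(t) = p} is finite. In other words, no point of the curve other than possibly the origin is traced for infinitely many parameter values; a single point cannot be crossed by infinitely many branches of the curve. -/

import Mathlib

/-!
On the fiber over `p`, `r(t)² = ‖p‖²` since `cos² + sin² = 1`, so every such `t` with `B(t) ≠ 0`
is a root of `A² - ‖p‖² B²`. That polynomial is nonzero: `A² = c B²` with `A, B` coprime forces
`B` to be a unit and then `A` to be constant, i.e. `r` constant.
-/

/-- The domain Ω = {t : B(t) ≠ 0 and D(t) ≠ 0}. -/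
def polarDomain (B D : Polynomial ℝ) : Set ℝ :=
  {t : ℝ | B.eval t ≠ 0 ∧ D.eval t ≠ 0}

/-- The rational function defined by a pair of polynomials, e.g. r(t) = A(t)/B(t). -/
noncomputable def ratFun (A B : Polynomial ℝ) (t : ℝ) : ℝ :=
  A.eval t / B.eval t

/-- The curve in Cartesian coordinates: P(t) = (r(t)·cos(θ(t)), r(t)·sin(θ(t))). -/
noncomputable def polarCurve (A B C D : Polynomial ℝ) (t : ℝ) : ℝ × ℝ :=
  (ratFun A B t * Real.cos (ratFun C D t), ratFun A B t * Real.sin (ratFun C D t))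

open Polynomial

theorem IsCoprime.natDegree_eq_zero_of_sq_eq_C_mul_sq {R : Type*} [CommRing R] [IsDomain R]
    {A B : R[X]} (hAB : IsCoprime A B) {c : R} (h : A ^ 2 = C c * B ^ 2) :
    A.natDegree = 0 ∧ B.natDegree = 0 := by
  have hB : IsUnit B := by
    have hunit : IsUnit (B ^ 2) := hAB.pow.isUnit_of_dvd' ⟨C c, by rw [h, mul_comm]⟩ dvd_rfl
    exact isUnit_of_dvd_unit (dvd_pow_self B two_ne_zero) hunit
  have hBdeg : B.natDegree = 0 := natDegree_eq_zero_of_isUnit hB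
  have hAdeg : 2 * A.natDegree ≤ 0 := calc
    2 * A.natDegree = (C c * B ^ 2).natDegree := by rw [← h, natDegree_pow, mul_comm]
    _ ≤ (C c).natDegree + (B ^ 2).natDegree := natDegree_mul_le
    _ = 0 := by rw [natDegree_C, natDegree_pow, hBdeg]
  exact ⟨by omega, hBdeg⟩

theorem polarCurve_fst_sq_add_snd_sq (A B C D : ℝ[X]) (t : ℝ) :
    (polarCurve A B C D t).1 ^ 2 + (polarCurve A B C D t).2 ^ 2 = ratFun A B t ^ 2 := by
  simp only [polarCurve]
  linear_combination ratFun A B t ^ 2 * Real.sin_sq_add_cos_sq (ratFun C D t)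

theorem isRoot_sq_sub_C_mul_sq_of_polarCurve_eq {A B C D : ℝ[X]} {t : ℝ} {p : ℝ × ℝ}
    (hBt : B.eval t ≠ 0) (ht : polarCurve A B C D t = p) :
    (A ^ 2 - Polynomial.C (p.1 ^ 2 + p.2 ^ 2) * B ^ 2).IsRoot t := by
  have hr : (A.eval t / B.eval t) ^ 2 = p.1 ^ 2 + p.2 ^ 2 := by
    rw [← ht, polarCurve_fst_sq_add_snd_sq, ratFun]
  simp only [IsRoot, eval_sub, eval_mul, eval_pow, eval_C, ← hr]
  field_simp
  ring

theorem finite_fibers_away_from_origin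
    (A B C D : Polynomial ℝ)
    (hAB : IsCoprime A B)
    (hr : ¬ (A.natDegree = 0 ∧ B.natDegree = 0)) :
    ∀ p : ℝ × ℝ, p ≠ (0, 0) →
      {t ∈ polarDomain B D | polarCurve A B C D t = p}.Finite := by
  intro p _
  have hQ : A ^ 2 - Polynomial.C (p.1 ^ 2 + p.2 ^ 2) * B ^ 2 ≠ 0 :=
    sub_ne_zero.mpr fun h => hr (hAB.natDegree_eq_zero_of_sq_eq_C_mul_sq h)
  refine (finite_setOfPred_isRoot hQ).subset ?_
  rintro t ⟨⟨hBt, -⟩, ht⟩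
  exact isRoot_sq_sub_C_mul_sq_of_polarCurve_eq hBt ht
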